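/- Let μ₁ = (1+ε)μ₀ with ε > 0, μ₀ > 0, and σ̂₁ > σ̂₀ > 0. Then the smaller root T₋ = (σ̂₀²μ₁ − σ̂₁²μ₀)/(σ̂₀² − σ̂₁²) − √( σ̂₀²σ̂₁²((μ₀−μ₁)² + 2(σ̂₀²−σ̂₁²)ln(σ̂₀/σ̂₁)) / (σ̂₀²−σ̂₁²)² ) of the Gaussian density-crossing quadratic satisfies T₋ < μ₀. -/

import Mathlib

/-! The centre `(σ̂₀²μ₁ − σ̂₁²μ₀)/(σ̂₀² − σ̂₁²)` of the two roots equals `μ₀ + εμ₀ σ̂₀²/(σ̂₀² − σ̂₁²)`,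
which lies strictly below `μ₀` because `σ̂₀² < σ̂₁²`; the smaller root is obtained from it by
subtracting a square root, so it lies below `μ₀` as well. -/

lemma crossing_center_eq {a b : ℝ} (μ0 ε : ℝ) (hab : a ≠ b) :
    (a * ((1 + ε) * μ0) - b * μ0) / (a - b) = μ0 + ε * μ0 * (a / (a - b)) := by
  field_simp [sub_ne_zero.2 hab]
  ring

lemma crossing_center_lt {a b μ0 ε : ℝ} (hμ0 : 0 < μ0) (hε : 0 < ε) (ha : 0 < a) (hab : a < b) :
    (a * ((1 + ε) * μ0) - b * μ0) / (a - b) < μ0 := by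
  rw [crossing_center_eq μ0 ε hab.ne]
  have hfrac : a / (a - b) < 0 := div_neg_of_pos_of_neg ha (sub_neg.2 hab)
  linarith [mul_neg_of_pos_of_neg (mul_pos hε hμ0) hfrac]

/-- with `μ₁ = (1+ε)μ₀`, `ε > 0`, `μ₀ > 0`, `σ̂₁ > σ̂₀ > 0`, the negative-sign
root `T₋` of the Gaussian density-crossing quadratic satisfies `T₋ < μ₀`. -/
theorem negative_root_lt_mu0 (μ0 ε s0 s1 : ℝ)
    (hμ0 : 0 < μ0) (hε : 0 < ε) (hs0 : 0 < s0) (hs01 : s0 < s1) :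
    (s0 ^ 2 * ((1 + ε) * μ0) - s1 ^ 2 * μ0) / (s0 ^ 2 - s1 ^ 2) -
      Real.sqrt (s0 ^ 2 * s1 ^ 2 *
          ((μ0 - (1 + ε) * μ0) ^ 2 + 2 * (s0 ^ 2 - s1 ^ 2) * Real.log (s0 / s1)) /
        (s0 ^ 2 - s1 ^ 2) ^ 2) < μ0 := by
  have hsq : s0 ^ 2 < s1 ^ 2 := pow_lt_pow_left₀ hs01 hs0.le two_ne_zero
  exact (sub_le_self _ (Real.sqrt_nonneg _)).trans_lt
    (crossing_center_lt hμ0 hε (pow_pos hs0 2) hsq)
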